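/- Commensurate prior implies an effective borrowing weight representation: in the conjugate normal-mean model where Ȳ_H | μ_H ~ N(μ_H, σ²/n_H) and Ȳ_C | μ_C ~ N(μ_C, σ²/n_C) are independent with known σ² > 0, with flat base prior π(μ_H) ∝ 1 and commensurate link μ_C | μ_H, τ ~ N(μ_H, τ⁻¹) for fixed τ > 0, the posterior mean of μ_C given the data is E[μ_C | D_C, D_H, τ] = (1 − w(τ))Ȳ_C + w(τ)Ȳ_H, where w(τ) = m_eff(τ)/(n_C + m_eff(τ)) with effective historical sample size m_eff(τ) = σ²/(σ²/n_H + τ⁻¹); equivalently w(τ) = λ(τ)n_H/(n_C + λ(τ)n_H) with λ(τ) = m_eff(τ)/n_H = σ²τ/(σ²τ + n_H) ∈ (0,1). -/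

import Mathlib

open MeasureTheory ProbabilityTheory NNReal

/-!
Integrating out `μ_H` turns the two Gaussian factors in `μ_H` into one: the marginal likelihood
of `Ȳ_H` given `μ_C` is `N(μ_C, σ²/n_H + τ⁻¹)`. The posterior density of `μ_C` is then a product of
two Gaussian densities in `μ_C`, which is a constant times a Gaussian density whose mean is the
precision-weighted average of `Ȳ_C` and `Ȳ_H`. The weight of `Ȳ_H` is
`(σ²/n_C) / (σ²/n_C + σ²/n_H + τ⁻¹)`, which is `w(τ)`.
-/

namespace ProbabilityTheory

lemma gaussianPDFReal_comm (μ : ℝ) (v : ℝ≥0) (x : ℝ) :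
    gaussianPDFReal μ v x = gaussianPDFReal x v μ := by
  rw [gaussianPDFReal, gaussianPDFReal, sub_sq_comm]

lemma gaussianPDFReal_mul_gaussianPDFReal {v₁ v₂ : ℝ≥0} (hv₁ : v₁ ≠ 0) (hv₂ : v₂ ≠ 0)
    (a b x : ℝ) :
    gaussianPDFReal a v₁ x * gaussianPDFReal b v₂ x =
      gaussianPDFReal a (v₁ + v₂) b *
        gaussianPDFReal ((v₂ * a + v₁ * b) / (v₁ + v₂)) (v₁ * v₂ / (v₁ + v₂)) x := by
  have hp : (0 : ℝ) < v₁ := by positivity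
  have hq : (0 : ℝ) < v₂ := by positivity
  simp only [gaussianPDFReal, NNReal.coe_add, NNReal.coe_mul, NNReal.coe_div]
  rw [mul_mul_mul_comm, mul_mul_mul_comm _ (Real.exp _), ← mul_inv, ← mul_inv,
    ← Real.sqrt_mul (by positivity), ← Real.sqrt_mul (by positivity), ← Real.exp_add,
    ← Real.exp_add]
  congr 2
  · field_simp
  · field_simp
    ring

lemma integral_gaussianPDFReal_mul_gaussianPDFReal {v₁ v₂ : ℝ≥0} (hv₁ : v₁ ≠ 0)
    (hv₂ : v₂ ≠ 0) (a b : ℝ) :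
    ∫ x, gaussianPDFReal a v₁ x * gaussianPDFReal b v₂ x = gaussianPDFReal a (v₁ + v₂) b := by
  have hv : v₁ * v₂ / (v₁ + v₂) ≠ 0 := by positivity
  simp_rw [gaussianPDFReal_mul_gaussianPDFReal hv₁ hv₂, integral_const_mul,
    integral_gaussianPDFReal_eq_one _ hv, mul_one]

lemma integral_id_mul_gaussianPDFReal (μ : ℝ) {v : ℝ≥0} (hv : v ≠ 0) :
    ∫ x, x * gaussianPDFReal μ v x = μ := by
  simpa [mul_comm] using (integral_gaussianReal_eq_integral_smul (f := id) hv).symm.trans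
    (integral_id_gaussianReal (μ := μ) (v := v))

lemma integral_id_mul_gaussianPDFReal_mul_gaussianPDFReal_div {v₁ v₂ : ℝ≥0} (hv₁ : v₁ ≠ 0)
    (hv₂ : v₂ ≠ 0) (a b : ℝ) :
    (∫ x, x * (gaussianPDFReal a v₁ x * gaussianPDFReal b v₂ x)) /
        ∫ x, gaussianPDFReal a v₁ x * gaussianPDFReal b v₂ x =
      (v₂ * a + v₁ * b) / (v₁ + v₂) := by
  have hv : v₁ * v₂ / (v₁ + v₂) ≠ 0 := by positivity
  have hK : gaussianPDFReal a (v₁ + v₂) b ≠ 0 := (gaussianPDFReal_pos _ _ _ (by positivity)).ne'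
  simp_rw [gaussianPDFReal_mul_gaussianPDFReal hv₁ hv₂, mul_left_comm _ (gaussianPDFReal a _ b),
    integral_const_mul, integral_id_mul_gaussianPDFReal _ hv, integral_gaussianPDFReal_eq_one _ hv,
    mul_div_mul_left _ _ hK, div_one]

end ProbabilityTheory

/-- **Commensurate prior implies an effective borrowing weight representation.**
In the conjugate normal-mean model where `Ȳ_H | μ_H ~ N(μ_H, σ²/n_H)` and
`Ȳ_C | μ_C ~ N(μ_C, σ²/n_C)` are independent with known `σ² > 0`, with flat base
prior `π(μ_H) ∝ 1` and commensurate link `μ_C | μ_H, τ ~ N(μ_H, τ⁻¹)` for fixed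
`τ > 0`, the posterior mean of `μ_C` — expressed as the ratio of Lebesgue integrals
of the unnormalized posterior density
`f(μ_C) = ∫ φ(Ȳ_H; μ_H, σ²/n_H) φ(Ȳ_C; μ_C, σ²/n_C) φ(μ_C; μ_H, τ⁻¹) dμ_H` —
satisfies `E[μ_C | D_C, D_H, τ] = (1 − w(τ))Ȳ_C + w(τ)Ȳ_H`, where
`w(τ) = m_eff(τ)/(n_C + m_eff(τ))` with effective historical sample size
`m_eff(τ) = σ²/(σ²/n_H + τ⁻¹)`; equivalently
`w(τ) = λ(τ)n_H/(n_C + λ(τ)n_H)` with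
`λ(τ) = m_eff(τ)/n_H = σ²τ/(σ²τ + n_H) ∈ (0,1)`. -/
theorem commensurate_prior_posterior_mean_is_ebw
    (σ2 τ : NNReal) (hσ2 : 0 < σ2) (hτ : 0 < τ)
    (nC nH : ℕ) (hnC : 0 < nC) (hnH : 0 < nH)
    (Ybar_C Ybar_H : ℝ) :
    -- unnormalized posterior density of `μ_C` given the data, flat prior on `μ_H`
    let f : ℝ → ℝ := fun μC => ∫ μH : ℝ,
      gaussianPDFReal μH (σ2 / (nH : NNReal)) Ybar_H *
      gaussianPDFReal μC (σ2 / (nC : NNReal)) Ybar_C *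
      gaussianPDFReal μH τ⁻¹ μC
    -- effective historical sample size `m_eff(τ) = σ²/(σ²/n_H + τ⁻¹)`
    let meff : ℝ := (σ2 : ℝ) / ((σ2 : ℝ) / (nH : ℝ) + ((τ : ℝ))⁻¹)
    -- effective borrowing weight `w(τ)`
    let w : ℝ := meff / ((nC : ℝ) + meff)
    -- implied borrowing parameter `λ(τ)`
    let lamτ : ℝ := meff / (nH : ℝ)
    -- posterior mean is the EBW combination
    (∫ μC : ℝ, μC * f μC) / (∫ μC : ℝ, f μC) = (1 - w) * Ybar_C + w * Ybar_H ∧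
    -- equivalent EBW form of the weight
    w = lamτ * (nH : ℝ) / ((nC : ℝ) + lamτ * (nH : ℝ)) ∧
    lamτ = (σ2 : ℝ) * (τ : ℝ) / ((σ2 : ℝ) * (τ : ℝ) + (nH : ℝ)) ∧
    lamτ ∈ Set.Ioo (0 : ℝ) 1 := by
  intro f meff w lamτ
  have hvC : σ2 / (nC : ℝ≥0) ≠ 0 := by positivity
  have hvH : σ2 / (nH : ℝ≥0) ≠ 0 := by positivity
  have hf : f = fun μC => gaussianPDFReal Ybar_C (σ2 / (nC : ℝ≥0)) μC *
      gaussianPDFReal Ybar_H (σ2 / (nH : ℝ≥0) + τ⁻¹) μC := by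
    funext μC
    calc f μC
        = (∫ μH, gaussianPDFReal Ybar_H (σ2 / (nH : ℝ≥0)) μH * gaussianPDFReal μC τ⁻¹ μH) *
            gaussianPDFReal μC (σ2 / (nC : ℝ≥0)) Ybar_C := by
          rw [← integral_mul_const]
          refine integral_congr_ae (.of_forall fun μH => ?_)
          dsimp only
          rw [gaussianPDFReal_comm μH, gaussianPDFReal_comm μH τ⁻¹]
          ring
      _ = _ := by
          rw [integral_gaussianPDFReal_mul_gaussianPDFReal hvH (inv_ne_zero hτ.ne'),
            gaussianPDFReal_comm μC, mul_comm]
  have hs : (0 : ℝ) < σ2 := hσ2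
  have ht : (0 : ℝ) < τ := hτ
  have hc : (0 : ℝ) < nC := by exact_mod_cast hnC
  have hh : (0 : ℝ) < nH := by exact_mod_cast hnH
  have hlam : lamτ = σ2 * τ / (σ2 * τ + nH) := by
    simp only [lamτ, meff]
    field_simp
  refine ⟨?_, ?_, hlam, ?_⟩
  · rw [hf, integral_id_mul_gaussianPDFReal_mul_gaussianPDFReal_div hvC (by positivity)]
    simp only [w, meff]
    push_cast
    field_simp
    ring
  · simp only [w, lamτ, div_mul_cancel₀ _ hh.ne']
  · rw [hlam]
    constructor
    · positivity
    · rw [div_lt_one (by positivity)]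
      linarith
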